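/- Let R be a commutative Noetherian ring, p a prime ideal, and r a positive integer. Then P_R(p^r) = p^r (i.e., R has an RPE filtration over the ideal p^r whose associated product of primes is p^r) if and only if p^r ≠ p^{r-1} and Ass_R(R/p^r) = {p}. -/

import Mathlib

variable {R : Type*} [CommRing R] {M : Type*} [AddCommGroup M] [Module R M]

/-- The colon submodule `(N :_M I) = {x ∈ M | I • x ⊆ N}`. -/
def colonSubmodule (N : Submodule R M) (I : Ideal R) : Submodule R M where
  carrier := {x | ∀ a ∈ I, a • x ∈ N}
  add_mem' := fun hx hy a ha => by simpa [smul_add] using N.add_mem (hx a ha) (hy a ha)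
  zero_mem' := fun a _ => by simp
  smul_mem' := fun c x hx a ha => by
    rw [smul_comm]
    exact N.smul_mem c (hx a ha)

/-- `K` is a `p`-prime extension of `N`, i.e. `N` is a `p`-prime submodule of `K`. -/
def IsPrimeExt (p : Ideal R) (N K : Submodule R M) : Prop :=
  N < K ∧ N.colon K = p ∧ ∀ a : R, ∀ x ∈ K, a • x ∈ N → x ∈ N ∨ a ∈ p

/-- The associated primes of `T / N` for submodules `N ≤ T ≤ M`. -/
def assOf (R : Type*) {M : Type*} [CommRing R] [AddCommGroup M] [Module R M]
    (N T : Submodule R M) : Set (Ideal R) :=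
  associatedPrimes R ↥(T.map N.mkQ)

/-- `K` is a maximal `p`-prime extension of `N` inside `T`. -/
def IsMaximalPrimeExtIn (T : Submodule R M) (p : Ideal R) (N K : Submodule R M) : Prop :=
  K ≤ T ∧ IsPrimeExt p N K ∧ ∀ L ≤ T, IsPrimeExt p N L → ¬ K < L

/-- `K` is a regular `p`-prime extension of `N` inside `T`: a maximal `p`-prime
extension where `p` is a maximal element of `Ass (T/N)`. -/
def IsRegularPrimeExtIn (T : Submodule R M) (p : Ideal R) (N K : Submodule R M) : Prop :=
  IsMaximalPrimeExtIn T p N K ∧ Maximal (· ∈ assOf R N T) p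

/-- A regular prime extension (RPE) filtration inside `T` with primes `p i`. -/
def IsRPEFiltrationIn (T : Submodule R M) {n : ℕ}
    (F : Fin (n + 1) → Submodule R M) (p : Fin n → Ideal R) : Prop :=
  ∀ i : Fin n, IsRegularPrimeExtIn T (p i) (F i.castSucc) (F i.succ)

/-- The generalized prime ideal factorization of `N` in `T` is given by the multiset `s`:
there is an RPE filtration of `T` over `N` whose multiset of primes is `s`. -/
def HasGPIF (N T : Submodule R M) (s : Multiset (Ideal R)) : Prop :=
  ∃ (n : ℕ) (F : Fin (n + 1) → Submodule R M) (p : Fin n → Ideal R),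
    F 0 = N ∧ F (Fin.last n) = T ∧ IsRPEFiltrationIn T F p ∧ (List.ofFn p : Multiset (Ideal R)) = s

/-!
Call `N ⊆ M` saturated at `p` if every `a ∉ p` acts injectively on `M ⧸ N`. If it is, then every
`p`-prime extension of `N` lies in the colon `(N :_M p)`, which is itself a `p`-prime extension
as soon as it is larger than `N`; so a maximal one *is* `(N :_M p)`. Saturation descends along
prime extensions from `M`, and it is preserved by colons. Hence an RPE filtration of `M` over `N`
whose primes all equal `p` is forced to be `(N :_M p^k)`, `k = 0, …, n`, and it exists iff `N` is
saturated at `p`, `(N :_M p^n) = M`, and `p ∈ Ass(M ⧸ (N :_M p^k))` for `k < n`.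

For `N = p^r ⊆ R` Noetherian, saturation at `p` says `Ass(R ⧸ p^r) ⊆ {p}`, the last condition at
`k = r - 1` says `(p^r : p^(r-1)) ≠ R`, i.e. `p^r ≠ p^(r-1)`, and conversely each proper ideal
`(p^r : p^k)` is saturated at `p` and contains `p^r`, so its only associated prime is `p`.
-/

section Colon

variable {N : Submodule R M} {I J : Ideal R}

lemma mem_colonSubmodule {x : M} : x ∈ colonSubmodule N I ↔ ∀ a ∈ I, a • x ∈ N := Iff.rfl

lemma le_colonSubmodule : N ≤ colonSubmodule N I := fun _ hx a _ => N.smul_mem a hx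

lemma colonSubmodule_one : colonSubmodule N 1 = N :=
  le_antisymm (fun x hx => by simpa using hx 1 (by simp)) le_colonSubmodule

lemma colonSubmodule_colonSubmodule :
    colonSubmodule (colonSubmodule N I) J = colonSubmodule N (I * J) := by
  ext x
  simp only [mem_colonSubmodule]
  refine ⟨fun h c hc => ?_, fun h b hb a ha => ?_⟩
  · refine Submodule.mul_induction_on hc (fun a ha b hb => ?_) fun c d hc hd => ?_
    · rw [mul_smul]
      exact h b hb a ha
    · rw [add_smul]
      exact N.add_mem hc hd
  · rw [← mul_smul]
    exact h _ (Ideal.mul_mem_mul ha hb)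

lemma colonSubmodule_eq_top_iff {I J : Ideal R} : colonSubmodule I J = ⊤ ↔ J ≤ I := by
  rw [Submodule.eq_top_iff']
  exact ⟨fun h a ha => by simpa using h 1 a ha, fun h x a ha => I.mul_mem_right x (h ha)⟩

end Colon

lemma mem_bot_colon_quotient_mk {N : Submodule R M} {x : M} {a : R} :
    a ∈ (⊥ : Submodule R (M ⧸ N)).colon {Submodule.Quotient.mk x} ↔ a • x ∈ N := by
  rw [Submodule.mem_colon_singleton, Submodule.mem_bot, ← Submodule.Quotient.mk_smul,
    Submodule.Quotient.mk_eq_zero]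

/-- For prime `p`, this says that `N` is the contraction of its localization at `p`. -/
def IsSaturatedAt (p : Ideal R) (N : Submodule R M) : Prop :=
  ∀ a ∉ p, ∀ x : M, a • x ∈ N → x ∈ N

section Saturated

variable {p : Ideal R} {N K : Submodule R M}

namespace IsSaturatedAt

lemma of_pow_smul_mem (h : IsSaturatedAt p N) {a : R} (ha : a ∉ p) {x : M} :
    ∀ m : ℕ, a ^ m • x ∈ N → x ∈ N
  | 0, hx => by simpa using hx
  | m + 1, hx => h.of_pow_smul_mem ha m (h a ha _ (by rwa [pow_succ', mul_smul] at hx))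

lemma colonSubmodule (h : IsSaturatedAt p N) (I : Ideal R) :
    IsSaturatedAt p (colonSubmodule N I) :=
  fun a ha x hx b hb => h a ha _ (by rw [smul_comm]; exact hx b hb)

lemma le_of_mem_associatedPrimes (h : IsSaturatedAt p N) {q : Ideal R}
    (hq : q ∈ associatedPrimes R (M ⧸ N)) : q ≤ p := by
  obtain ⟨hq, x, rfl⟩ := hq
  obtain ⟨x, rfl⟩ := Submodule.Quotient.mk_surjective N x
  intro a ha
  by_contra hap
  obtain ⟨m, hm⟩ := ha
  rw [mem_bot_colon_quotient_mk] at hm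
  apply hq.ne_top
  rw [(Submodule.Quotient.mk_eq_zero N).mpr (h.of_pow_smul_mem hap m hm),
    Submodule.colon_singleton_zero, Ideal.radical_top]

end IsSaturatedAt

lemma isSaturatedAt_of_forall_associatedPrimes_le [IsNoetherianRing R]
    (h : ∀ q ∈ associatedPrimes R (M ⧸ N), q ≤ p) : IsSaturatedAt p N := by
  intro a ha x hax
  by_contra hx
  obtain ⟨q, hq, hle⟩ := exists_le_isAssociatedPrime_of_isNoetherianRing R
    (Submodule.Quotient.mk x : M ⧸ N) (by rwa [Ne, Submodule.Quotient.mk_eq_zero])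
  exact ha (h q hq (hle (mem_bot_colon_quotient_mk.mpr hax)))

lemma lt_colonSubmodule_of_mem_associatedPrimes [IsNoetherianRing R]
    (hp : p ∈ associatedPrimes R (M ⧸ N)) : N < colonSubmodule N p := by
  obtain ⟨hprime, x, hx⟩ := isAssociatedPrime_iff.mp hp
  obtain ⟨x, rfl⟩ := Submodule.Quotient.mk_surjective N x
  have hmem (a : R) : a ∈ p ↔ a • x ∈ N := by rw [hx, mem_bot_colon_quotient_mk]
  refine SetLike.lt_iff_le_and_exists.mpr ⟨le_colonSubmodule, x, fun a ha => (hmem a).mp ha,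
    fun hxN => hprime.ne_top ((Ideal.eq_top_iff_one p).mpr ((hmem 1).mpr ?_))⟩
  rwa [one_smul]

namespace IsPrimeExt

lemma le_colonSubmodule (h : IsPrimeExt p N K) : K ≤ colonSubmodule N p :=
  fun x hx a ha => Submodule.mem_colon.mp (h.2.1 ▸ ha : a ∈ N.colon K) x hx

lemma isSaturatedAt (h : IsPrimeExt p N K) (hK : IsSaturatedAt p K) : IsSaturatedAt p N :=
  fun a ha x hx => (h.2.2 a x (hK a ha x (h.1.le hx)) hx).resolve_right ha

end IsPrimeExt

lemma isPrimeExt_colonSubmodule (hN : IsSaturatedAt p N) (hlt : N < colonSubmodule N p) :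
    IsPrimeExt p N (colonSubmodule N p) := by
  obtain ⟨x, hx, hxN⟩ := SetLike.exists_of_lt hlt
  refine ⟨hlt, le_antisymm (fun a ha => ?_) (fun a ha => ?_),
    fun a y _ hay => or_iff_not_imp_right.mpr fun hap => hN a hap y hay⟩
  · by_contra hap
    exact hxN (hN a hap x (Submodule.mem_colon.mp ha x hx))
  · exact Submodule.mem_colon.mpr fun y hy => hy a ha

lemma IsMaximalPrimeExtIn.eq_colonSubmodule (h : IsMaximalPrimeExtIn ⊤ p N K)
    (hN : IsSaturatedAt p N) : K = colonSubmodule N p := by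
  obtain ⟨-, hK, hmax⟩ := h
  have hle := hK.le_colonSubmodule
  exact hle.eq_of_not_lt (hmax _ le_top (isPrimeExt_colonSubmodule hN (hK.1.trans_le hle)))

lemma assOf_top (N : Submodule R M) :
    assOf R N (⊤ : Submodule R M) = associatedPrimes R (M ⧸ N) := by
  rw [assOf, Submodule.map_top, Submodule.range_mkQ]
  exact LinearEquiv.AssociatedPrimes.eq Submodule.topEquiv

lemma isRegularPrimeExtIn_top_colonSubmodule [IsNoetherianRing R] (hN : IsSaturatedAt p N)
    (hp : p ∈ associatedPrimes R (M ⧸ N)) : IsRegularPrimeExtIn ⊤ p N (colonSubmodule N p) := by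
  refine ⟨⟨le_top, isPrimeExt_colonSubmodule hN (lt_colonSubmodule_of_mem_associatedPrimes hp),
    fun L _ hL => not_lt_of_ge hL.le_colonSubmodule⟩, ?_⟩
  rw [assOf_top]
  exact ⟨hp, fun q hq _ => hN.le_of_mem_associatedPrimes hq⟩

end Saturated

section Filtration

variable {n : ℕ} {p : Ideal R} {F : Fin (n + 1) → Submodule R M}

lemma hasGPIF_replicate_iff {N T : Submodule R M} :
    HasGPIF N T (Multiset.replicate n p) ↔
      ∃ F : Fin (n + 1) → Submodule R M, F 0 = N ∧ F (Fin.last n) = T ∧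
        IsRPEFiltrationIn T F fun _ => p := by
  refine ⟨?_, fun ⟨F, h0, hlast, hF⟩ =>
    ⟨n, F, _, h0, hlast, hF, by simp [List.ofFn_const, Multiset.coe_replicate]⟩⟩
  rintro ⟨m, F, q, h0, hlast, hF, hq⟩
  obtain rfl : m = n := by simpa using congrArg Multiset.card hq
  obtain rfl : q = fun _ => p :=
    funext fun i => Multiset.eq_of_mem_replicate (hq ▸ by simp : q i ∈ Multiset.replicate m p)
  exact ⟨F, h0, hlast, hF⟩

namespace IsRPEFiltrationIn

lemma isSaturatedAt (hF : IsRPEFiltrationIn ⊤ F fun _ => p) (hlast : F (Fin.last n) = ⊤)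
    (j : Fin (n + 1)) : IsSaturatedAt p (F j) := by
  induction j using Fin.reverseInduction with
  | last => rw [hlast]; exact fun _ _ _ _ => Submodule.mem_top
  | cast i ih => exact (hF i).1.2.1.isSaturatedAt ih

lemma eq_colonSubmodule_pow (hF : IsRPEFiltrationIn ⊤ F fun _ => p)
    (hlast : F (Fin.last n) = ⊤) (j : Fin (n + 1)) : F j = colonSubmodule (F 0) (p ^ (j : ℕ)) := by
  induction j using Fin.induction with
  | zero => rw [Fin.val_zero, pow_zero, colonSubmodule_one]
  | succ i ih =>
    rw [(hF i).1.eq_colonSubmodule (hF.isSaturatedAt hlast _), ih, colonSubmodule_colonSubmodule,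
      ← pow_succ, Fin.val_succ, Fin.val_castSucc]

end IsRPEFiltrationIn

theorem hasGPIF_top_replicate_iff [IsNoetherianRing R] {N : Submodule R M} :
    HasGPIF N ⊤ (Multiset.replicate n p) ↔ IsSaturatedAt p N ∧ colonSubmodule N (p ^ n) = ⊤ ∧
      ∀ k < n, p ∈ associatedPrimes R (M ⧸ colonSubmodule N (p ^ k)) := by
  rw [hasGPIF_replicate_iff]
  constructor
  · rintro ⟨F, rfl, hlast, hF⟩
    have hFeq := hF.eq_colonSubmodule_pow hlast
    refine ⟨hF.isSaturatedAt hlast 0, (hFeq _).symm.trans hlast, fun k hk => ?_⟩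
    have := (hF ⟨k, hk⟩).2.prop
    rwa [assOf_top, hFeq] at this
  · rintro ⟨hN, htop, hass⟩
    refine ⟨fun k => colonSubmodule N (p ^ (k : ℕ)), ?_, htop, fun i => ?_⟩
    · dsimp only
      rw [Fin.val_zero, pow_zero, colonSubmodule_one]
    · simp only [Fin.val_succ, Fin.val_castSucc, pow_succ, ← colonSubmodule_colonSubmodule]
      exact isRegularPrimeExtIn_top_colonSubmodule (hN.colonSubmodule _) (hass i i.isLt)

end Filtration

lemma le_of_mem_associatedPrimes_quotient {I q : Ideal R} (hq : q ∈ associatedPrimes R (R ⧸ I)) :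
    I ≤ q := by
  simpa [Submodule.annihilator_top, Ideal.annihilator_quotient] using
    IsAssociatedPrime.annihilator_le hq

lemma associatedPrimes_quotient_subset_singleton {I p : Ideal R} {r : ℕ}
    (hI : IsSaturatedAt p I) (hpI : p ^ r ≤ I) : associatedPrimes R (R ⧸ I) ⊆ {p} := fun _ hq =>
  have := hq.isPrime
  le_antisymm (hI.le_of_mem_associatedPrimes hq)
    (Ideal.IsPrime.le_of_pow_le (hpI.trans (le_of_mem_associatedPrimes_quotient hq)))

theorem gpif_pow_iff_general {R : Type*} [CommRing R] [IsNoetherianRing R]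
    (p : Ideal R) (r : ℕ) (hr : 0 < r) :
    HasGPIF (p ^ r : Ideal R) (⊤ : Submodule R R) (Multiset.replicate r p) ↔
      p ^ r ≠ p ^ (r - 1) ∧ associatedPrimes R (R ⧸ (p ^ r : Ideal R)) = {p} := by
  rw [hasGPIF_top_replicate_iff, colonSubmodule_eq_top_iff.mpr le_rfl, eq_self, true_and]
  constructor
  · rintro ⟨hsat, hass⟩
    have hp : p ∈ associatedPrimes R (R ⧸ p ^ r) := by
      have := hass 0 hr
      rwa [pow_zero, colonSubmodule_one] at this
    refine ⟨fun h => ?_,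
      (associatedPrimes_quotient_subset_singleton hsat le_rfl).antisymm (by simpa using hp)⟩
    have hlt := lt_colonSubmodule_of_mem_associatedPrimes (hass (r - 1) (by omega))
    rw [colonSubmodule_eq_top_iff.mpr h.ge] at hlt
    exact not_top_lt hlt
  · rintro ⟨hne, hass⟩
    have hsat : IsSaturatedAt p (p ^ r) := isSaturatedAt_of_forall_associatedPrimes_le
      fun q hq => (Set.mem_singleton_iff.mp (hass ▸ hq)).le
    refine ⟨hsat, fun k hk => ?_⟩
    have hproper : colonSubmodule (p ^ r) (p ^ k) ≠ ⊤ := by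
      rw [Ne, colonSubmodule_eq_top_iff]
      exact fun h => hne (le_antisymm (Ideal.pow_le_pow_right (by omega))
        ((Ideal.pow_le_pow_right (by omega)).trans h))
    have := Ideal.Quotient.nontrivial_iff.mpr hproper
    obtain ⟨q, hq⟩ := associatedPrimes.nonempty R (R ⧸ colonSubmodule (p ^ r) (p ^ k))
    obtain rfl := associatedPrimes_quotient_subset_singleton (hsat.colonSubmodule _)
      le_colonSubmodule hq
    exact hq

/-- `P_R(p^r) = p^r` (i.e. `R` has an RPE filtration over `p^r` whose multiset of primes
is `r` copies of `p`) iff `p^r ≠ p^(r-1)` and `Ass (R/p^r) = {p}`. -/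
theorem gpif_pow_iff {R : Type*} [CommRing R] [IsNoetherianRing R]
    (p : Ideal R) (hp : p.IsPrime) (r : ℕ) (hr : 0 < r) :
    HasGPIF (p ^ r : Ideal R) (⊤ : Submodule R R) (Multiset.replicate r p) ↔
      p ^ r ≠ p ^ (r - 1) ∧ associatedPrimes R (R ⧸ (p ^ r : Ideal R)) = {p} :=
  gpif_pow_iff_general p r hr
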